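/- Let Φ = Φ_NS be a density operator on H_N ⊗ H_S and Ψ = Ψ_NT a density operator on H_N ⊗ H_T. If Φ is better than Ψ, then the partial states of N agree: tr_S[Φ] = tr_T[Ψ], where tr_S and tr_T denote the partial traces over H_S and H_T respectively. -/
import Mathlib


open Matrix Kronecker BigOperators
open scoped ComplexOrder

/-- A density operator: positive semidefinite with trace 1. -/
def IsDensity {ι : Type} [Fintype ι] (A : Matrix ι ι ℂ) : Prop :=
  A.PosSemidef ∧ A.trace = 1

/-- A POVM with `k` outcomes: positive semidefinite operators summing to the identity. -/
def IsPOVM {ι : Type} [Fintype ι] [DecidableEq ι] {k : ℕ}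
    (D : Fin k → Matrix ι ι ℂ) : Prop :=
  (∀ i, (D i).PosSemidef) ∧ ∑ i, D i = 1

/-- Reindexing that aligns the tensor factors N⊗S⊗A⊗B with (N⊗B)⊗(S⊗A). -/
def reord {n s a b : ℕ} :
    (Fin n × Fin s) × (Fin a × Fin b) → (Fin n × Fin b) × (Fin s × Fin a) :=
  fun p => ((p.1.1, p.2.2), (p.1.2, p.2.1))

/-- The expected payoff `tr((Φ ⊗ ρ)·(M ⊗ D))`, with tensor factors reordered so that
`M` acts on `H_N ⊗ H_B` and `D` acts on `H_S ⊗ H_A`. -/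
noncomputable def payoff {n s a b : ℕ}
    (Φ : Matrix (Fin n × Fin s) (Fin n × Fin s) ℂ)
    (ρ : Matrix (Fin a × Fin b) (Fin a × Fin b) ℂ)
    (M : Matrix (Fin n × Fin b) (Fin n × Fin b) ℂ)
    (D : Matrix (Fin s × Fin a) (Fin s × Fin a) ℂ) : ℝ :=
  (((Φ ⊗ₖ ρ) * ((M ⊗ₖ D).submatrix reord reord)).trace).re

/-- The value of the game `(ρ, M^1, …, M^k)` over the information structure `Φ`:
the maximal expected payoff over all strategies (POVMs on `H_S ⊗ H_A`). -/
noncomputable def Rval {n s a b k : ℕ}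
    (Φ : Matrix (Fin n × Fin s) (Fin n × Fin s) ℂ)
    (ρ : Matrix (Fin a × Fin b) (Fin a × Fin b) ℂ)
    (M : Fin k → Matrix (Fin n × Fin b) (Fin n × Fin b) ℂ) : ℝ :=
  sSup {r : ℝ | ∃ D : Fin k → Matrix (Fin s × Fin a) (Fin s × Fin a) ℂ,
    IsPOVM D ∧ r = ∑ i, payoff Φ ρ (M i) (D i)}

/-- `Φ` is better than `Ψ`: in every game (environment `ρ_AB` together with Hermitian
payoff observables `M^1, …, M^k` on `H_N ⊗ H_B`) the value over `Φ` is at least the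
value over `Ψ`. -/
def Better {n s t : ℕ}
    (Φ : Matrix (Fin n × Fin s) (Fin n × Fin s) ℂ)
    (Ψ : Matrix (Fin n × Fin t) (Fin n × Fin t) ℂ) : Prop :=
  ∀ (a b k : ℕ) (ρ : Matrix (Fin a × Fin b) (Fin a × Fin b) ℂ)
    (M : Fin k → Matrix (Fin n × Fin b) (Fin n × Fin b) ℂ),
    IsDensity ρ → (∀ i, (M i).IsHermitian) →
      Rval Ψ ρ M ≤ Rval Φ ρ M


/-- Partial trace over the second tensor factor. -/
noncomputable def ptraceRight {n s : ℕ} (X : Matrix (Fin n × Fin s) (Fin n × Fin s) ℂ) :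
    Matrix (Fin n) (Fin n) ℂ :=
  Matrix.of fun i j => ∑ σ : Fin s, X (i, σ) (j, σ)

/-- Lift an `n×n` matrix to `H_N ⊗ H_{S=1}` (trivial second factor). -/
noncomputable def liftN {n : ℕ} (H : Matrix (Fin n) (Fin n) ℂ) :
    Matrix (Fin n × Fin 1) (Fin n × Fin 1) ℂ :=
  Matrix.of fun p q => H p.1 q.1

lemma liftN_isHermitian {n : ℕ} {H : Matrix (Fin n) (Fin n) ℂ} (hH : H.IsHermitian) :
    (liftN H).IsHermitian := by
  ext p q
  simpa [liftN, Matrix.conjTranspose_apply] using hH.apply p.1 q.1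

lemma liftN_neg {n : ℕ} (H : Matrix (Fin n) (Fin n) ℂ) : liftN (-H) = -liftN H := by
  ext p q; simp [liftN]

lemma payoff_one {n s : ℕ} (Φ : Matrix (Fin n × Fin s) (Fin n × Fin s) ℂ)
    (H : Matrix (Fin n) (Fin n) ℂ) :
    payoff Φ (1 : Matrix (Fin 1 × Fin 1) (Fin 1 × Fin 1) ℂ)
      (liftN H) 1 = ((ptraceRight Φ) * H).trace.re := by
  unfold payoff
  congr 1
  simp only [Matrix.trace, Matrix.diag, Matrix.mul_apply, Matrix.kroneckerMap_apply,
    Matrix.submatrix_apply, reord, ptraceRight, liftN, Matrix.of_apply,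
    Fintype.sum_prod_type, Fin.sum_univ_one, Matrix.one_apply, Prod.mk.injEq, and_true,
    if_true, mul_one, mul_ite, ite_mul, mul_zero, zero_mul, Finset.sum_ite_eq,
    Finset.mem_univ]
  refine Finset.sum_congr rfl fun i _ => ?_
  rw [Finset.sum_comm]
  refine Finset.sum_congr rfl fun j _ => ?_
  simp [Finset.sum_mul]

lemma Rval_one {n s : ℕ} (Φ : Matrix (Fin n × Fin s) (Fin n × Fin s) ℂ)
    (M : Matrix (Fin n × Fin 1) (Fin n × Fin 1) ℂ) :
    Rval Φ (1 : Matrix (Fin 1 × Fin 1) (Fin 1 × Fin 1) ℂ) (fun _ : Fin 1 => M)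
      = payoff (a := 1) Φ 1 M 1 := by
  unfold Rval
  have hset : {r : ℝ | ∃ D : Fin 1 → Matrix (Fin s × Fin 1) (Fin s × Fin 1) ℂ,
      IsPOVM D ∧ r = ∑ i, payoff Φ 1 M (D i)} = {payoff (a := 1) Φ 1 M 1} := by
    ext r
    simp only [Set.mem_setOf_eq, Set.mem_singleton_iff]
    constructor
    · rintro ⟨D, ⟨hpos, hsum⟩, rfl⟩
      have hD : D 0 = 1 := by simpa [Fin.sum_univ_one] using hsum
      simp [Fin.sum_univ_one, hD]
    · rintro rfl
      exact ⟨fun _ => 1, ⟨fun _ => Matrix.PosDef.one.posSemidef, by simp⟩, by simp⟩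
  rw [hset, csSup_singleton]

lemma one_isDensity : IsDensity (1 : Matrix (Fin 1 × Fin 1) (Fin 1 × Fin 1) ℂ) := by
  constructor
  · exact Matrix.PosDef.one.posSemidef
  · simp [Matrix.trace_one]

lemma ptraceRight_isHermitian {n s : ℕ} {X : Matrix (Fin n × Fin s) (Fin n × Fin s) ℂ}
    (hX : X.IsHermitian) : (ptraceRight X).IsHermitian := by
  ext i j
  simp only [Matrix.conjTranspose_apply, ptraceRight, Matrix.of_apply, star_sum]
  exact Finset.sum_congr rfl fun σ _ => hX.apply (i, σ) (j, σ)

lemma trace_mul_std {n : ℕ} (C : Matrix (Fin n) (Fin n) ℂ) (i j : Fin n) (c : ℂ) :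
    (C * Matrix.single j i c).trace = C i j * c := by
  simp [Matrix.trace, Matrix.mul_apply, Matrix.single, Matrix.diag,
    Finset.sum_ite_eq, ite_and]

/-- If `Φ` is better than `Ψ` then the partial states of `N` agree:
`tr_S[Φ] = tr_T[Ψ]`. -/
theorem better_implies_same_marginal (n s t : ℕ)
    (Φ : Matrix (Fin n × Fin s) (Fin n × Fin s) ℂ)
    (Ψ : Matrix (Fin n × Fin t) (Fin n × Fin t) ℂ)
    (hΦ : IsDensity Φ) (hΨ : IsDensity Ψ)
    (hbetter : Better Φ Ψ) :
    ptraceRight Φ = ptraceRight Ψ := by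
  have stdCT : ∀ (i j : Fin n) (c : ℂ),
      (Matrix.single j i c)ᴴ = Matrix.single i j (star c) := by
    intro i j c
    ext p q
    simp only [Matrix.conjTranspose_apply, Matrix.single, Matrix.of_apply]
    split_ifs with h1 h2 h3 <;> simp_all
  have key : ∀ H : Matrix (Fin n) (Fin n) ℂ, H.IsHermitian →
      ((ptraceRight Ψ) * H).trace.re ≤ ((ptraceRight Φ) * H).trace.re := by
    intro H hH
    have := hbetter 1 1 1 1 (fun _ => liftN H) one_isDensity
      (fun _ => liftN_isHermitian hH)
    rwa [Rval_one, Rval_one, payoff_one, payoff_one] at this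
  have key2 : ∀ H : Matrix (Fin n) (Fin n) ℂ, H.IsHermitian →
      ((ptraceRight Φ) * H).trace.re = ((ptraceRight Ψ) * H).trace.re := by
    intro H hH
    have h1 := key H hH
    have h2 := key (-H) hH.neg
    simp only [Matrix.mul_neg, Matrix.trace_neg, Complex.neg_re, neg_le_neg_iff] at h2
    linarith
  have hA := ptraceRight_isHermitian hΦ.1.1
  have hB := ptraceRight_isHermitian hΨ.1.1
  ext i j
  have herm1 : (Matrix.single j i (1:ℂ) + Matrix.single i j (1:ℂ)).IsHermitian := by
    unfold Matrix.IsHermitian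
    rw [Matrix.conjTranspose_add, stdCT, stdCT]
    simp [add_comm]
  have herm2 : (Matrix.single j i Complex.I
      + Matrix.single i j (-Complex.I)).IsHermitian := by
    unfold Matrix.IsHermitian
    rw [Matrix.conjTranspose_add, stdCT, stdCT]
    simp [add_comm, Complex.star_def]
  have e1 := key2 _ herm1
  have e2 := key2 _ herm2
  rw [mul_add, mul_add, Matrix.trace_add, Matrix.trace_add,
    trace_mul_std, trace_mul_std, trace_mul_std, trace_mul_std] at e1 e2
  have hAji : ptraceRight Φ j i = star (ptraceRight Φ i j) := (hA.apply j i).symm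
  have hBji : ptraceRight Ψ j i = star (ptraceRight Ψ i j) := (hB.apply j i).symm
  rw [hAji, hBji] at e1 e2
  apply Complex.ext
  · simp only [mul_one, Complex.add_re, Complex.star_def, Complex.conj_re] at e1
    linarith
  · simp only [Complex.add_re, Complex.mul_re, Complex.star_def, Complex.conj_re,
      Complex.conj_im, Complex.I_re, Complex.I_im, Complex.neg_re, Complex.neg_im] at e2
    linarith
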